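/- Let X ⊆ 2^ω. Then X is a Q-set (every subset of X is a relative G_δ of X) if and only if for every Y ⊆ X there exists Z ⊆ 2^{<ω} with {x↾n : n ∈ ω} ⊆* Z for all x ∈ Y and {x↾n : n ∈ ω} ∩ Z finite for all x ∈ X∖Y. -/

import Mathlib

open Set Topology

/-- The length-n initial segment of x : ℕ → Bool as a finite binary sequence. -/
def res (x : ℕ → Bool) (n : ℕ) : List Bool := (List.range n).map x

/-- The branch a_x = {x↾n : n ∈ ω} ⊆ 2^{<ω}. -/
def branch (x : ℕ → Bool) : Set (List Bool) := Set.range (res x)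

/-- Y is a relative G_δ subset of X. -/
def IsRelGdelta {α : Type*} [TopologicalSpace α] (X Y : Set α) : Prop :=
  ∃ U : ℕ → Set α, (∀ n, IsOpen (U n)) ∧ Y = X ∩ ⋂ n, U n

/-- Y is a relative F_σ subset of X. -/
def IsRelFsigma {α : Type*} [TopologicalSpace α] (X Y : Set α) : Prop :=
  ∃ C : ℕ → Set α, (∀ n, IsClosed (C n)) ∧ Y = X ∩ ⋃ n, C n

/-- Z is a weak λ-set. -/
def IsWeakLambda {α : Type*} [TopologicalSpace α] (Z : Set α) : Prop :=
  ∀ Y W : Set α, Y ⊆ Z → W ⊆ Z → Y.Countable → W.Countable → Disjoint Y W →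
    ∃ H ⊆ Z, IsRelGdelta Z H ∧ IsRelFsigma Z H ∧ Y ⊆ H ∧ W ⊆ Z \ H

/-- S is an F_σ subset of the whole space. -/
def IsFsigma {α : Type*} [TopologicalSpace α] (S : Set α) : Prop :=
  ∃ C : ℕ → Set α, (∀ n, IsClosed (C n)) ∧ S = ⋃ n, C n

/-!
If every subset of `X` is a relative `G_δ`, then `Y` and `X \ Y` are the traces on `X` of
`G_δ` sets `G = ⋂ Uₙ` and `H = ⋂ Wₙ` with decreasing open `Uₙ`, `Wₙ`. Taking for `Z` the
sequences `s` whose basic open set `[s]` lies in some `Uₙ` but not in `Wₙ`, the branch of a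
point of `G \ H` eventually stays in `Z`, and that of a point of `H \ G` eventually avoids it.
Conversely, given `Z`, the points whose branch meets `Z` infinitely often form a `G_δ` set
whose trace on `X` is `Y`.
-/

open Filter

lemma isRelGdelta_iff {α : Type*} [TopologicalSpace α] {X Y : Set α} :
    IsRelGdelta X Y ↔ ∃ G, IsGδ G ∧ Y = X ∩ G := by
  simp only [IsRelGdelta, isGδ_iff_eq_iInter_nat]
  constructor
  · rintro ⟨U, hU, rfl⟩
    exact ⟨_, ⟨U, hU, rfl⟩, rfl⟩
  · rintro ⟨_, ⟨U, hU, rfl⟩, rfl⟩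
    exact ⟨U, hU, rfl⟩

lemma IsGδ.exists_antitone_eq_iInter {α : Type*} [TopologicalSpace α] {G : Set α}
    (hG : IsGδ G) : ∃ U : ℕ → Set α, (∀ n, IsOpen (U n)) ∧ Antitone U ∧ G = ⋂ n, U n := by
  obtain ⟨U, hU, rfl⟩ := hG.eq_iInter_nat
  refine ⟨fun n => ⋂ i ≤ n, U i, fun n => (finite_le_nat n).isOpen_biInter fun i _ => hU i,
    fun m n hmn => biInter_mono (fun i hi => le_trans hi hmn) fun _ _ => subset_rfl, ?_⟩
  ext x
  simp only [mem_iInter]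
  exact ⟨fun h n i _ => h i, fun h n => h n n le_rfl⟩

lemma res_length (x : ℕ → Bool) (k : ℕ) : (res x k).length = k := by
  simp [res]

lemma res_injective (x : ℕ → Bool) : Function.Injective (res x) := fun m n h => by
  simpa only [res_length] using congrArg List.length h

lemma res_eq_res_iff {x y : ℕ → Bool} {k : ℕ} : res y k = res x k ↔ y ∈ PiNat.cylinder x k := by
  simp only [res, PiNat.mem_cylinder_iff, List.map_inj_left, List.mem_range]

lemma isOpen_setOf_res_mem (Z : Set (List Bool)) (k : ℕ) : IsOpen {y | res y k ∈ Z} :=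
  isOpen_iff_forall_mem_open.2 fun y hy =>
    ⟨PiNat.cylinder y k, fun z hz => by rwa [mem_ofPred_eq, res_eq_res_iff.2 hz],
      PiNat.isOpen_cylinder _ y k, PiNat.self_mem_cylinder y k⟩

lemma isGδ_setOf_frequently_res_mem (Z : Set (List Bool)) :
    IsGδ {y | ∃ᶠ k in atTop, res y k ∈ Z} := by
  have h : {y | ∃ᶠ k in atTop, res y k ∈ Z} = ⋂ n, ⋃ k ≥ n, {y | res y k ∈ Z} := by
    ext y
    simp [frequently_atTop]
  rw [h]
  exact .iInter_of_isOpen fun n => isOpen_biUnion fun k _ => isOpen_setOf_res_mem Z k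

lemma eventually_cylinder_subset {E : ℕ → Type*} [∀ n, TopologicalSpace (E n)]
    [∀ n, DiscreteTopology (E n)] {U : Set (∀ n, E n)} (hU : IsOpen U) {x : ∀ n, E n}
    (hx : x ∈ U) : ∀ᶠ k in atTop, PiNat.cylinder x k ⊆ U := by
  obtain ⟨_, ⟨y, n, rfl⟩, hxy, hyU⟩ :=
    (PiNat.isTopologicalBasis_cylinders E).exists_subset_of_mem_open hx hU
  rw [PiNat.mem_cylinder_iff_eq] at hxy
  exact eventually_atTop.2 ⟨n, fun k hk => (PiNat.cylinder_anti x hk).trans (hxy ▸ hyU)⟩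

lemma finite_branch_inter_iff (x : ℕ → Bool) (Z : Set (List Bool)) :
    (branch x ∩ Z).Finite ↔ ∀ᶠ k in atTop, res x k ∉ Z := by
  rw [branch, ← image_preimage_eq_range_inter, finite_image_iff (res_injective x).injOn,
    ← Nat.cofinite_eq_atTop, eventually_cofinite]
  simp only [not_not]
  rfl

lemma finite_branch_diff_iff (x : ℕ → Bool) (Z : Set (List Bool)) :
    (branch x \ Z).Finite ↔ ∀ᶠ k in atTop, res x k ∈ Z := by
  simp only [sdiff_eq, finite_branch_inter_iff, mem_compl_iff, not_not]

def basicOpen (s : List Bool) : Set (ℕ → Bool) := {y | res y s.length = s}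

lemma basicOpen_res (x : ℕ → Bool) (k : ℕ) : basicOpen (res x k) = PiNat.cylinder x k := by
  ext y
  simp only [basicOpen, mem_ofPred_eq, res_length, res_eq_res_iff]

theorem exists_eventually_res_mem_of_isGδ {G H : Set (ℕ → Bool)} (hG : IsGδ G) (hH : IsGδ H) :
    ∃ Z : Set (List Bool), (∀ x ∈ G \ H, ∀ᶠ k in atTop, res x k ∈ Z) ∧
      ∀ x ∈ H \ G, ∀ᶠ k in atTop, res x k ∉ Z := by
  obtain ⟨U, hUo, hU, rfl⟩ := hG.exists_antitone_eq_iInter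
  obtain ⟨W, hWo, hW, rfl⟩ := hH.exists_antitone_eq_iInter
  refine ⟨{s | ∃ n, basicOpen s ⊆ U n ∧ ¬basicOpen s ⊆ W n}, ?_, ?_⟩
  · rintro x ⟨hxU, hxW⟩
    obtain ⟨m, hm⟩ : ∃ m, x ∉ W m := by simpa using hxW
    filter_upwards [eventually_cylinder_subset (hUo m) (mem_iInter.1 hxU m)] with k hk
    rw [basicOpen_res]
    exact ⟨m, hk, fun h => hm (h (PiNat.self_mem_cylinder x k))⟩
  · rintro x ⟨hxW, hxU⟩
    obtain ⟨m, hm⟩ : ∃ m, x ∉ U m := by simpa using hxU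
    filter_upwards [eventually_cylinder_subset (hWo m) (mem_iInter.1 hxW m)] with k hk
    rw [basicOpen_res]
    rintro ⟨n, hkU, hkW⟩
    rcases le_total n m with hnm | hmn
    · exact hkW (hk.trans (hW hnm))
    · exact hm (hU hmn (hkU (PiNat.self_mem_cylinder x k)))

theorem stmt12 (X : Set (ℕ → Bool)) :
    (∀ Y ⊆ X, IsRelGdelta X Y) ↔
      (∀ Y ⊆ X, ∃ Z : Set (List Bool),
        (∀ x ∈ Y, (branch x \ Z).Finite) ∧ (∀ x ∈ X \ Y, (branch x ∩ Z).Finite)) := by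
  constructor
  · intro hQ Y hY
    obtain ⟨G, hG, hYG⟩ := isRelGdelta_iff.1 (hQ Y hY)
    obtain ⟨H, hH, hYH⟩ := isRelGdelta_iff.1 (hQ (X \ Y) sdiff_subset)
    obtain ⟨Z, hGZ, hHZ⟩ := exists_eventually_res_mem_of_isGδ hG hH
    refine ⟨Z, fun x hx => (finite_branch_diff_iff x Z).2 (hGZ x ?_),
      fun x hx => (finite_branch_inter_iff x Z).2 (hHZ x ?_)⟩
    · exact ⟨(hYG ▸ hx).2, fun hxH => (hYH.symm ▸ ⟨hY hx, hxH⟩ : x ∈ X \ Y).2 hx⟩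
    · exact ⟨(hYH ▸ hx).2, fun hxG => hx.2 (hYG.symm ▸ ⟨hx.1, hxG⟩)⟩
  · intro hZ Y hY
    obtain ⟨Z, hYZ, hXYZ⟩ := hZ Y hY
    refine isRelGdelta_iff.2 ⟨_, isGδ_setOf_frequently_res_mem Z, Set.ext fun x => ⟨?_, ?_⟩⟩
    · exact fun hx => ⟨hY hx, ((finite_branch_diff_iff x Z).1 (hYZ x hx)).frequently⟩
    · rintro ⟨hxX, hx⟩
      by_contra hxY
      exact not_frequently.2 ((finite_branch_inter_iff x Z).1 (hXYZ x ⟨hxX, hxY⟩)) hx
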